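/- Let μ be a probability measure, E an event with μ_b(E) > 0 where μ_b is a second probability measure absolutely continuous with respect to μ with density dμ_b/dμ = exp(b·Z - b²·σ²/2) for a centered Gaussian variable Z (under μ) with variance σ². Then μ(E) ≥ μ_b(E)·exp(-(b²σ² + 2/e)/(2·μ_b(E))). -/

import Mathlib

/-!
Write `dμ_b = e^U dμ` with `U = b Z - b²σ²/2`. Integrating the tangent-line bound
`(1 + m - u) e^u ≤ e^m` (convexity of `exp`) over `E` gives
`(1 + m) μ_b(E) - ∫_E U dμ_b ≤ e^m μ(E)` for every `m`; if `∫_E U dμ_b ≤ K`, the choice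
`m = K / μ_b(E)` yields `μ(E) ≥ μ_b(E) e^{-K/μ_b(E)}`. Since `-u e^u ≤ 1/e`, restricting to `E`
raises `∫ U dμ_b` by at most `1/e`, so `K = H + 1/e` works, where `H = ∫ U e^U dμ` is the relative
entropy of `μ_b`; for the Gaussian tilt `H = b²σ²/2`, read off from the derivative of the
moment generating function `t ↦ exp(σ² t²/2)` of `Z`.
-/

open MeasureTheory ProbabilityTheory Real

section

variable {Ω : Type*} [MeasurableSpace Ω] {μ : Measure Ω}

lemma measureReal_withDensity_ofReal {f : Ω → ℝ} {s : Set Ω} (hs : MeasurableSet s)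
    (hf : AEStronglyMeasurable f (μ.restrict s)) (hf0 : ∀ x, 0 ≤ f x) :
    (μ.withDensity fun x => ENNReal.ofReal (f x)).real s = ∫ x in s, f x ∂μ := by
  rw [measureReal_def, withDensity_apply _ hs,
    integral_eq_lintegral_of_nonneg_ae (.of_forall hf0) hf]

section Entropy

variable {U : Ω → ℝ}

lemma setIntegral_mul_exp_le [IsProbabilityMeasure μ]
    (hU : Integrable (fun ω => U ω * exp (U ω)) μ) {s : Set Ω} (hs : MeasurableSet s) :
    ∫ ω in s, U ω * exp (U ω) ∂μ ≤ ∫ ω, U ω * exp (U ω) ∂μ + exp (-1) := by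
  have hcompl : -∫ ω in sᶜ, U ω * exp (U ω) ∂μ ≤ exp (-1) :=
    calc -∫ ω in sᶜ, U ω * exp (U ω) ∂μ = ∫ ω in sᶜ, -U ω * exp (-(-U ω)) ∂μ := by
          simp [← integral_neg]
      _ ≤ ∫ _ in sᶜ, exp (-1) ∂μ :=
          setIntegral_mono (by simpa using hU.neg.integrableOn) (integrable_const _)
            fun ω => mul_exp_neg_le_exp_neg_one _
      _ = μ.real sᶜ * exp (-1) := by simp
      _ ≤ exp (-1) := mul_le_of_le_one_left (exp_pos _).le measureReal_le_one
  linarith [integral_add_compl hs hU]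

lemma one_add_sub_mul_exp_le_exp (m u : ℝ) : (1 + m - u) * exp u ≤ exp m :=
  calc (1 + m - u) * exp u ≤ exp (m - u) * exp u := by
        gcongr
        linarith [add_one_le_exp (m - u)]
    _ = exp m := by rw [← exp_add, sub_add_cancel]

lemma one_add_mul_setIntegral_exp_sub_le [IsFiniteMeasure μ]
    (hexp : Integrable (fun ω => exp (U ω)) μ) (hUexp : Integrable (fun ω => U ω * exp (U ω)) μ)
    (s : Set Ω) (m : ℝ) :
    (1 + m) * ∫ ω in s, exp (U ω) ∂μ - ∫ ω in s, U ω * exp (U ω) ∂μ ≤ exp m * μ.real s :=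
  calc (1 + m) * ∫ ω in s, exp (U ω) ∂μ - ∫ ω in s, U ω * exp (U ω) ∂μ
      = ∫ ω in s, (1 + m - U ω) * exp (U ω) ∂μ := by
        rw [← integral_const_mul, ← integral_sub (hexp.const_mul _).integrableOn hUexp.integrableOn]
        simp only [sub_mul]
    _ ≤ ∫ _ in s, exp m ∂μ := by
        have hint := ((hexp.const_mul (1 + m)).sub hUexp).integrableOn (s := s)
        simp only [Pi.sub_def, ← sub_mul] at hint
        exact setIntegral_mono hint (integrable_const _) fun ω => one_add_sub_mul_exp_le_exp m (U ω)
    _ = exp m * μ.real s := by simp [mul_comm]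

theorem setIntegral_exp_mul_exp_neg_le_measureReal [IsProbabilityMeasure μ]
    (hexp : Integrable (fun ω => exp (U ω)) μ) (hUexp : Integrable (fun ω => U ω * exp (U ω)) μ)
    {s : Set Ω} (hs : MeasurableSet s) (hpos : 0 < ∫ ω in s, exp (U ω) ∂μ) :
    (∫ ω in s, exp (U ω) ∂μ) *
      exp (-(∫ ω, U ω * exp (U ω) ∂μ + exp (-1)) / ∫ ω in s, exp (U ω) ∂μ) ≤ μ.real s := by
  set ν := ∫ ω in s, exp (U ω) ∂μ
  set K := ∫ ω, U ω * exp (U ω) ∂μ + exp (-1)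
  have hK : ∫ ω in s, U ω * exp (U ω) ∂μ ≤ K := setIntegral_mul_exp_le hUexp hs
  have hKν : K / ν * ν = K := div_mul_cancel₀ K hpos.ne'
  have hν : ν ≤ exp (K / ν) * μ.real s := by
    nlinarith [one_add_mul_setIntegral_exp_sub_le hexp hUexp s (K / ν)]
  rwa [neg_div, exp_neg, ← div_eq_mul_inv, div_le_iff₀' (exp_pos _)]

end Entropy

section Gaussian

variable [NeZero μ] {Z : Ω → ℝ} {m : ℝ} {v : NNReal}

lemma integrable_exp_mul_of_map_eq_gaussianReal (h : μ.map Z = gaussianReal m v) (t : ℝ) :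
    Integrable (fun ω => exp (t * Z ω)) μ :=
  mgf_pos_iff.1 (by rw [mgf_gaussianReal h]; exact exp_pos _)

lemma integrableExpSet_eq_univ_of_map_eq_gaussianReal (h : μ.map Z = gaussianReal m v) :
    integrableExpSet Z μ = Set.univ :=
  Set.eq_univ_of_forall (integrable_exp_mul_of_map_eq_gaussianReal h)

lemma integrable_mul_exp_mul_of_map_eq_gaussianReal (h : μ.map Z = gaussianReal m v) (t : ℝ) :
    Integrable (fun ω => Z ω * exp (t * Z ω)) μ := by
  simpa using integrable_pow_mul_exp_of_mem_interior_integrableExpSet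
    (by simp [integrableExpSet_eq_univ_of_map_eq_gaussianReal h]) 1

lemma integral_mul_exp_mul_of_map_eq_gaussianReal (h : μ.map Z = gaussianReal m v) (t : ℝ) :
    ∫ ω, Z ω * exp (t * Z ω) ∂μ = (m + v * t) * exp (m * t + v * t ^ 2 / 2) := by
  have hmgf : mgf Z μ = fun t => exp (m * t + v * t ^ 2 / 2) := funext (mgf_gaussianReal h)
  rw [← deriv_mgf (by simp [integrableExpSet_eq_univ_of_map_eq_gaussianReal h]), hmgf]
  have hpoly : HasDerivAt (fun t => m * t + v * t ^ 2 / 2) (m + v * t) t := by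
    have := ((hasDerivAt_id' t).const_mul m).fun_add
      (((hasDerivAt_pow 2 t).const_mul (v : ℝ)).div_const 2)
    exact this.congr_deriv (by norm_num; ring)
  rw [(hpoly.exp).deriv, mul_comm]

lemma integrable_cameronMartin_density (h : μ.map Z = gaussianReal 0 v) (t : ℝ) :
    Integrable (fun ω => exp (t * Z ω - t ^ 2 * v / 2)) μ := by
  simp_rw [exp_sub]
  exact (integrable_exp_mul_of_map_eq_gaussianReal h t).div_const _

lemma integrable_mul_cameronMartin_density (h : μ.map Z = gaussianReal 0 v) (t : ℝ) :
    Integrable (fun ω => (t * Z ω - t ^ 2 * v / 2) * exp (t * Z ω - t ^ 2 * v / 2)) μ := by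
  refine ((((integrable_mul_exp_mul_of_map_eq_gaussianReal h t).const_mul t).sub
    ((integrable_exp_mul_of_map_eq_gaussianReal h t).const_mul (t ^ 2 * v / 2))).div_const
      (exp (t ^ 2 * v / 2))).congr (.of_forall fun ω => ?_)
  simp only [Pi.sub_apply]
  rw [exp_sub]
  ring

lemma integral_mul_cameronMartin_density (h : μ.map Z = gaussianReal 0 v) (t : ℝ) :
    ∫ ω, (t * Z ω - t ^ 2 * v / 2) * exp (t * Z ω - t ^ 2 * v / 2) ∂μ = t ^ 2 * v / 2 := by
  set c : ℝ := t ^ 2 * v / 2 with hc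
  have hmgf : ∫ ω, exp (t * Z ω) ∂μ = exp c := by
    rw [← mgf, mgf_gaussianReal h, hc]
    ring_nf
  have hmean : ∫ ω, Z ω * exp (t * Z ω) ∂μ = v * t * exp c := by
    rw [integral_mul_exp_mul_of_map_eq_gaussianReal h, hc]
    ring_nf
  calc ∫ ω, (t * Z ω - c) * exp (t * Z ω - c) ∂μ
      = (t * ∫ ω, Z ω * exp (t * Z ω) ∂μ - c * ∫ ω, exp (t * Z ω) ∂μ) / exp c := by
        rw [← integral_const_mul, ← integral_const_mul, ← integral_sub, ← integral_div]
        · congr 1 with ω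
          rw [exp_sub]
          ring
        · exact (integrable_mul_exp_mul_of_map_eq_gaussianReal h t).const_mul t
        · exact (integrable_exp_mul_of_map_eq_gaussianReal h t).const_mul c
    _ = c := by
        rw [hmgf, hmean]
        field_simp
        ring

end Gaussian

end

theorem stmt15_general {Ω : Type*} [MeasurableSpace Ω] (μ : Measure Ω) [IsProbabilityMeasure μ]
    (Z : Ω → ℝ) (b : ℝ) (σ2 : NNReal)
    (hgauss : μ.map Z = gaussianReal 0 σ2)
    (E : Set Ω) (hE : MeasurableSet E)
    (μb : Measure Ω)
    (hμb : μb = μ.withDensity fun ω =>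
      ENNReal.ofReal (Real.exp (b * Z ω - b ^ 2 * (σ2 : ℝ) / 2)))
    (hpos : 0 < (μb E).toReal) :
    (μb E).toReal * Real.exp (-(b ^ 2 * (σ2 : ℝ) + 2 / Real.exp 1) /
      (2 * (μb E).toReal)) ≤ (μ E).toReal := by
  have hdensity := integrable_cameronMartin_density hgauss b
  have hμbE : (μb E).toReal = ∫ ω in E, exp (b * Z ω - b ^ 2 * σ2 / 2) ∂μ := by
    rw [hμb]
    exact measureReal_withDensity_ofReal hE hdensity.aestronglyMeasurable.restrict
      fun _ => (exp_pos _).le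
  have hbound := setIntegral_exp_mul_exp_neg_le_measureReal hdensity
    (integrable_mul_cameronMartin_density hgauss b) hE (hμbE ▸ hpos)
  rw [← hμbE, integral_mul_cameronMartin_density hgauss, exp_neg] at hbound
  convert hbound using 3
  · ring
  · rfl

theorem stmt15 {Ω : Type*} [MeasurableSpace Ω] (μ : Measure Ω) [IsProbabilityMeasure μ]
    (Z : Ω → ℝ) (hZ : Measurable Z) (b : ℝ) (σ2 : NNReal)
    (hgauss : μ.map Z = gaussianReal 0 σ2)
    (E : Set Ω) (hE : MeasurableSet E)
    (μb : Measure Ω)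
    (hμb : μb = μ.withDensity fun ω =>
      ENNReal.ofReal (Real.exp (b * Z ω - b ^ 2 * (σ2 : ℝ) / 2)))
    (hpos : 0 < (μb E).toReal) :
    (μb E).toReal * Real.exp (-(b ^ 2 * (σ2 : ℝ) + 2 / Real.exp 1) /
      (2 * (μb E).toReal)) ≤ (μ E).toReal :=
  stmt15_general μ Z b σ2 hgauss E hE μb hμb hpos
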